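/- arXiv:2503.23790 — 3 statements merged into one kernel-verified Lean document; each statement's English description precedes it below -/
import Mathlib

section
/- Let R = ⊕_{m≥0} R_m be a commutative graded ℂ-algebra with R_0 = ℂ, finitely generated in degree 1, equipped with an additional ℤ-grading R_m = ⊕_{k∈ℤ} (R_m)_k compatible with multiplication ((R_m)_k · (R_{m'})_{k'} ⊆ (R_{m+m'})_{k+k'}). Then for any rational numbers τ_- ≤ τ_+, the subalgebra A(τ_-,τ_+) = ⊕_{m≥0} ⊕_{mτ_- ≤ k ≤ mτ_+} (R_m)_k is a finitely generated ℂ-algebra. -/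
/-!
Choose finitely many bihomogeneous generators `f i` of `R`, of bidegrees `d i`. Each piece `𝒜 p`
is spanned by the monomials `∏ i, f i ^ α i` with `∑ i, α i • d i = p`, so `A(τ₋, τ₊)` is spanned by
the monomials whose exponent `α` lies in the preimage of the cone `{(m, k) | τ₋ m ≤ k ≤ τ₊ m}`.
After clearing the denominators of `τ₋` and `τ₊`, that preimage is cut out of `ℕ^ι` by two
integral linear inequalities, so it is a finitely generated monoid by Gordan's lemma, and the
monomials of its generators generate `A(τ₋, τ₊)`.
-/

noncomputable def nonnegLocus {M κ : Type*} [AddCommMonoid M] (φ : κ → M →+ ℤ) :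
    AddSubmonoid M :=
  ⨅ j, (AddSubmonoid.nonneg ℤ).comap (φ j)

@[simp]
theorem mem_nonnegLocus {M κ : Type*} [AddCommMonoid M] {φ : κ → M →+ ℤ} {x : M} :
    x ∈ nonnegLocus φ ↔ ∀ j, 0 ≤ φ j x := by
  simp [nonnegLocus, AddSubmonoid.mem_iInf]

theorem comap_nonnegLocus {M N κ : Type*} [AddCommMonoid M] [AddCommMonoid N]
    (φ : κ → M →+ ℤ) (g : N →+ M) :
    (nonnegLocus φ).comap g = nonnegLocus fun j => (φ j).comp g := by
  ext; simp

/-- `nonnegLocus ψ` is the projection to `ℕ^ι` of the monoid of pairs `(α, s) ∈ ℕ^ι × ℕ^κ` with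
`s j = ψ j α`, which is finitely generated by `AddSubmonoid.fg_eqLocusM`. -/
theorem fg_nonnegLocus {ι κ : Type*} [Finite ι] [Finite κ] (ψ : κ → (ι → ℕ) →+ ℤ) :
    (nonnegLocus ψ).FG := by
  let restrict : (ι ⊕ κ → ℕ) →+ (ι → ℕ) := (LinearMap.funLeft ℕ ℕ Sum.inl).toAddMonoidHom
  let slack : (ι ⊕ κ → ℕ) →+ (κ → ℤ) :=
    AddMonoidHom.pi fun j => (Nat.castAddMonoidHom ℤ).comp (Pi.evalAddMonoidHom _ (Sum.inr j))
  let value : (ι ⊕ κ → ℕ) →+ (κ → ℤ) := AddMonoidHom.pi fun j => (ψ j).comp restrict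
  convert (AddSubmonoid.fg_eqLocusM slack value).map restrict
  ext α
  constructor
  · intro hα
    refine ⟨Sum.elim α fun j => (ψ j α).toNat, ?_, rfl⟩
    ext j
    simp [slack, value, restrict, LinearMap.funLeft, Function.comp_def,
      Int.toNat_of_nonneg (mem_nonnegLocus.1 hα j)]
  · rintro ⟨x, hx, rfl⟩
    refine mem_nonnegLocus.2 fun j => ?_
    have hslack : (x (Sum.inr j) : ℤ) = ψ j (restrict x) := congr_fun hx j
    exact hslack ▸ Int.natCast_nonneg _

section Graded

variable {K R M : Type*} [CommSemiring K] [CommRing R] [Algebra K R] [AddCommMonoid M]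
  [DecidableEq M] (𝒜 : M → Submodule K R) [GradedAlgebra 𝒜]

theorem exists_finset_homogeneous_adjoin_eq_top (h : (⊤ : Subalgebra K R).FG) :
    ∃ s : Finset R, Algebra.adjoin K (s : Set R) = ⊤ ∧
      ∀ x ∈ s, SetLike.IsHomogeneousElem 𝒜 x := by
  classical
  obtain ⟨t, ht⟩ := h
  refine ⟨t.biUnion fun x => (DirectSum.decompose 𝒜 x).support.image
    fun p => (DirectSum.decompose 𝒜 x p : R), ?_, ?_⟩
  · rw [← top_le_iff, ← ht, Algebra.adjoin_le_iff]
    intro x hx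
    rw [← DirectSum.sum_support_decompose 𝒜 x]
    exact sum_mem fun p hp => Algebra.subset_adjoin
      (Finset.mem_biUnion.2 ⟨x, hx, Finset.mem_image_of_mem _ hp⟩)
  · simp only [Finset.mem_biUnion, Finset.mem_image]
    rintro _ ⟨x, -, p, -, rfl⟩
    exact ⟨p, (DirectSum.decompose 𝒜 x p).2⟩

theorem le_span_image_of_span_range_eq_top {β : Type*} (v : β → R) (e : β → M)
    (hv : ∀ b, v b ∈ 𝒜 (e b)) (hspan : Submodule.span K (Set.range v) = ⊤) (p : M) :
    𝒜 p ≤ Submodule.span K (v '' {b | e b = p}) := by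
  intro x hx
  have hproj : Submodule.span K (Set.range v) ≤
      (Submodule.span K (v '' {b | e b = p})).comap (GradedAlgebra.proj 𝒜 p) := by
    rw [Submodule.span_le]
    rintro _ ⟨b, rfl⟩
    by_cases hb : e b = p
    · rw [SetLike.mem_coe, Submodule.mem_comap, GradedAlgebra.proj_apply,
        DirectSum.decompose_of_mem_same 𝒜 (hb ▸ hv b)]
      exact Submodule.subset_span ⟨b, hb, rfl⟩
    · rw [SetLike.mem_coe, Submodule.mem_comap, GradedAlgebra.proj_apply,
        DirectSum.decompose_of_mem_ne 𝒜 (hv b) hb]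
      exact zero_mem _
  have hx' := hproj (by simp [hspan] : x ∈ Submodule.span K (Set.range v))
  rwa [Submodule.mem_comap, GradedAlgebra.proj_apply,
    DirectSum.decompose_of_mem_same 𝒜 hx] at hx'

variable {ι : Type*} [Fintype ι]

theorem span_range_prod_pow_eq_top {f : ι → R} (hf : Algebra.adjoin K (Set.range f) = ⊤) :
    Submodule.span K (Set.range fun α : ι → ℕ => ∏ i, f i ^ α i) = ⊤ := by
  have hclosure : (Submonoid.closure (Set.range f) : Set R) =
      Set.range fun α : ι → ℕ => ∏ i, f i ^ α i := by
    ext x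
    simp [Submonoid.mem_closure_range_iff_of_fintype, eq_comm]
  rw [← hclosure, ← Algebra.adjoin_eq_span, hf, Algebra.top_toSubmodule]

theorem fg_adjoin_iUnion_of_fg_comap (f : ι → R) (d : ι → M) (hf : ∀ i, f i ∈ 𝒜 (d i))
    (hgen : Algebra.adjoin K (Set.range f) = ⊤) (S : AddSubmonoid M)
    (hS : (S.comap (Fintype.linearCombination ℕ d).toAddMonoidHom).FG) :
    (Algebra.adjoin K (⋃ p ∈ S, (𝒜 p : Set R))).FG := by
  obtain ⟨G, hG⟩ := hS
  set deg := (Fintype.linearCombination ℕ d).toAddMonoidHom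
  set mono : (ι → ℕ) → R := fun α => ∏ i, f i ^ α i
  have mono_mem (α : ι → ℕ) : mono α ∈ 𝒜 (deg α) := by
    simpa [deg, Fintype.linearCombination_apply] using
      SetLike.prod_pow_mem_graded 𝒜 d f α fun i _ => hf i
  have mem_adjoin {α : ι → ℕ} (hα : deg α ∈ S) : mono α ∈ Algebra.adjoin K (mono '' G) := by
    rw [← AddSubmonoid.mem_comap, ← hG] at hα
    induction hα using AddSubmonoid.closure_induction with
    | mem α hα => exact Algebra.subset_adjoin ⟨α, hα, rfl⟩
    | zero => simp [mono]
    | add α β _ _ hα hβ => simpa [mono, pow_add, Finset.prod_mul_distrib] using mul_mem hα hβ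
  refine Subalgebra.fg_def.2 ⟨mono '' G, G.finite_toSet.image _, le_antisymm ?_ ?_⟩
  · rw [Algebra.adjoin_le_iff]
    rintro _ ⟨α, hα, rfl⟩
    have hαS : deg α ∈ S := by
      rw [← AddSubmonoid.mem_comap, ← hG]
      exact AddSubmonoid.subset_closure hα
    exact Algebra.subset_adjoin (Set.mem_biUnion hαS (mono_mem α))
  · rw [Algebra.adjoin_le_iff]
    simp only [Set.iUnion_subset_iff]
    intro p hp x hx
    rw [SetLike.mem_coe, ← Subalgebra.mem_toSubmodule]
    refine (le_span_image_of_span_range_eq_top 𝒜 mono deg mono_mem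
      (span_range_prod_pow_eq_top hgen) p).trans (Submodule.span_le.2 ?_) hx
    rintro _ ⟨α, rfl, rfl⟩
    exact mem_adjoin hp

theorem fg_adjoin_nonnegLocus (h : (⊤ : Subalgebra K R).FG) {κ : Type*} [Finite κ]
    (φ : κ → M →+ ℤ) : (Algebra.adjoin K (⋃ p ∈ nonnegLocus φ, (𝒜 p : Set R))).FG := by
  obtain ⟨s, hs, hhom⟩ := exists_finset_homogeneous_adjoin_eq_top 𝒜 h
  choose d hd using hhom
  refine fg_adjoin_iUnion_of_fg_comap 𝒜 (Subtype.val : s → R) (fun x => d x.1 x.2)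
    (fun x => hd x.1 x.2) (by rwa [Subtype.range_coe]) _ ?_
  rw [comap_nonnegLocus]
  exact fg_nonnegLocus _

end Graded

def slopeForm (τ : ℚ) : ℕ × ℤ →+ ℤ where
  toFun p := τ.den * p.2 - τ.num * p.1
  map_zero' := by simp
  map_add' p q := by simp only [Prod.fst_add, Prod.snd_add]; push_cast; ring

theorem cast_slopeForm (τ : ℚ) (p : ℕ × ℤ) :
    (slopeForm τ p : ℚ) = τ.den * (p.2 - τ * p.1) := by
  simp only [slopeForm, AddMonoidHom.coe_mk, ZeroHom.coe_mk]
  push_cast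
  rw [← Rat.mul_den_eq_num]
  ring

theorem slopeForm_nonneg_iff (τ : ℚ) (p : ℕ × ℤ) : 0 ≤ slopeForm τ p ↔ τ * p.1 ≤ p.2 := by
  rw [← Int.cast_nonneg_iff (R := ℚ), cast_slopeForm, mul_nonneg_iff_of_pos_left (by positivity),
    sub_nonneg]

theorem slopeForm_nonpos_iff (τ : ℚ) (p : ℕ × ℤ) : slopeForm τ p ≤ 0 ↔ (p.2 : ℚ) ≤ τ * p.1 := by
  rw [← Int.cast_nonpos (R := ℚ), cast_slopeForm, ← neg_nonneg, ← mul_neg,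
    mul_nonneg_iff_of_pos_left (by positivity), neg_nonneg, sub_nonpos]

theorem stmt_3_general (R : Type) [CommRing R] [Algebra ℂ R]
    (𝒜 : ℕ × ℤ → Submodule ℂ R) [GradedAlgebra 𝒜]
    (hfg : (⊤ : Subalgebra ℂ R).FG)
    (τm τp : ℚ) :
    (Algebra.adjoin ℂ
      (⋃ p ∈ {p : ℕ × ℤ | τm * p.1 ≤ (p.2 : ℚ) ∧ (p.2 : ℚ) ≤ τp * p.1},
        (𝒜 p : Set R))).FG := by
  have hcone : {p : ℕ × ℤ | τm * p.1 ≤ (p.2 : ℚ) ∧ (p.2 : ℚ) ≤ τp * p.1} =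
      nonnegLocus ![slopeForm τm, -slopeForm τp] := by
    ext p
    simp [Fin.forall_fin_two, slopeForm_nonneg_iff, slopeForm_nonpos_iff]
  rw [hcone]
  exact fg_adjoin_nonnegLocus 𝒜 hfg _

/-- Let `R = ⊕_{m≥0} R_m` be a commutative graded `ℂ`-algebra with
`R_0 = ℂ`, finitely generated in degree `1`, equipped with a compatible second
`ℤ`-grading `R_m = ⊕_k (R_m)_k` (encoded here as an `ℕ × ℤ`-graded algebra `𝒜`).
Then for rationals `τ₋ ≤ τ₊` the subalgebra
`A(τ₋,τ₊) = ⊕_{m≥0} ⊕_{mτ₋ ≤ k ≤ mτ₊} (R_m)_k` — which equals the subalgebra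
generated by the pieces `𝒜 (m,k)` with `mτ₋ ≤ k ≤ mτ₊` — is a finitely generated
`ℂ`-algebra. -/
theorem stmt_3 (R : Type) [CommRing R] [Algebra ℂ R]
    (𝒜 : ℕ × ℤ → Submodule ℂ R) [GradedAlgebra 𝒜]
    (h00 : 𝒜 (0, 0) = Submodule.span ℂ {(1 : R)})
    (h0k : ∀ k : ℤ, k ≠ 0 → 𝒜 (0, k) = ⊥)
    (hdeg1 : Algebra.adjoin ℂ (⋃ k : ℤ, (𝒜 (1, k) : Set R)) = ⊤)
    (hfg : (⊤ : Subalgebra ℂ R).FG)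
    (τm τp : ℚ) (hτ : τm ≤ τp) :
    (Algebra.adjoin ℂ
      (⋃ p ∈ {p : ℕ × ℤ | τm * p.1 ≤ (p.2 : ℚ) ∧ (p.2 : ℚ) ≤ τp * p.1},
        (𝒜 p : Set R))).FG :=
  stmt_3_general R 𝒜 hfg τm τp
end

section
/- Let R = ⊕_{m≥0} R_m be a finitely generated graded ℂ-algebra with a compatible second ℤ-grading as above. For any rational number τ, the subalgebra A(τ) = ⊕_{m≥0, mτ∈ℤ} (R_m)_{mτ} is a finitely generated ℂ-algebra. -/
/-!
Choose finitely many bihomogeneous generators `x_j` of `R`, of bidegrees `d_j`. Each graded piece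
`𝒜 p` is spanned by the monomials `x^α` of degree `∑ α_j d_j = p`, so `A(τ)` is generated by the
monomials whose exponent vectors lie in the kernel of the additive map
`α ↦ ∑ α_j ((d_j).2 - τ (d_j).1)` on `ℕ^n`. Such a kernel is closed under `a - b` for `b ≤ a`,
hence generated by its minimal nonzero elements, which form an antichain and are therefore finite
by Dickson's lemma (Gordan's lemma).
-/

section Gordan

variable {σ : Type*} [Finite σ]

theorem AddSubmonoid.fg_of_tsub_mem (S : AddSubmonoid (σ → ℕ))
    (hS : ∀ a ∈ S, ∀ b ∈ S, b ≤ a → a - b ∈ S) : S.FG := by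
  set atoms := {a | Minimal (fun b ↦ b ∈ S ∧ b ≠ 0) a}
  have hfin : atoms.Finite :=
    WellQuasiOrderedLE.finite_of_isAntichain (setOfPred_minimal_antichain _)
  refine ⟨hfin.toFinset, le_antisymm ?_ fun a ha ↦ ?_⟩
  · rw [AddSubmonoid.closure_le, hfin.coe_toFinset]
    exact fun _ ha ↦ ha.1.1
  rw [hfin.coe_toFinset]
  induction a using WellFoundedLT.induction with
  | _ a ih =>
  by_cases h0 : a = 0
  · exact h0 ▸ zero_mem _
  by_cases hmin : a ∈ atoms
  · exact AddSubmonoid.subset_closure hmin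
  obtain ⟨b, hbS, hb0, hba, hab⟩ : ∃ b ∈ S, b ≠ 0 ∧ b ≤ a ∧ ¬ a ≤ b := by
    simpa [atoms, Minimal, ha, h0] using hmin
  have hsub : a - b < a := tsub_le_self.lt_of_ne fun h ↦
    hb0 <| add_eq_right (b := a - b).mp <| by rw [add_tsub_cancel_of_le hba, h]
  rw [← add_tsub_cancel_of_le hba]
  exact add_mem (ih b (lt_of_le_not_ge hba hab) hbS) (ih _ hsub (hS a ha b hbS hba))

theorem AddMonoidHom.mker_fg {M : Type*} [AddMonoid M] (f : (σ → ℕ) →+ M) :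
    (AddMonoidHom.mker f).FG :=
  AddSubmonoid.fg_of_tsub_mem _ fun a ha b hb hba ↦ by
    have : f b + f (a - b) = f a := by rw [← map_add, add_tsub_cancel_of_le hba]
    simp_all [AddMonoidHom.mem_mker]

end Gordan

open Algebra

section Graded

variable {K R ι : Type*} [CommSemiring K] [CommSemiring R] [Algebra K R]
  [DecidableEq ι] [AddCommMonoid ι] (𝒜 : ι → Submodule K R) [GradedAlgebra 𝒜]

theorem GradedAlgebra.exists_finset_adjoin_eq_top_and_isHomogeneousElem
    (hfg : (⊤ : Subalgebra K R).FG) :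
    ∃ s : Finset R, adjoin K (s : Set R) = ⊤ ∧ ∀ r ∈ s, SetLike.IsHomogeneousElem 𝒜 r := by
  classical
  obtain ⟨F, hF⟩ := hfg
  refine ⟨F.biUnion fun a ↦ (DirectSum.decompose 𝒜 a).support.image
    fun i ↦ (DirectSum.decompose 𝒜 a i : R), ?_, ?_⟩
  · rw [← top_le_iff, ← hF, adjoin_le_iff]
    intro a ha
    rw [← DirectSum.sum_support_decompose 𝒜 a]
    exact sum_mem fun i hi ↦
      subset_adjoin (by simpa using ⟨a, ha, i, DFinsupp.mem_support_iff.1 hi, rfl⟩)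
  · simp only [Finset.mem_biUnion, Finset.mem_image]
    rintro _ ⟨a, -, i, -, rfl⟩
    exact ⟨i, SetLike.coe_mem _⟩

variable {σ : Type*} [Fintype σ] {x : σ → R} {d : σ → ι}

theorem GradedAlgebra.mem_span_prod_pow_of_mem (hx : ∀ j, x j ∈ 𝒜 (d j))
    (hgen : adjoin K (Set.range x) = ⊤) {p : ι} {r : R} (hr : r ∈ 𝒜 p) :
    r ∈ Submodule.span K
      ((fun α ↦ ∏ j, x j ^ α j) '' {α | Fintype.linearCombination ℕ d α = p}) := by
  have hspan : r ∈ Submodule.span K (Submonoid.closure (Set.range x) : Set R) := by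
    rw [← adjoin_eq_span, hgen]; trivial
  rw [← DirectSum.decompose_of_mem_same 𝒜 hr, ← GradedAlgebra.proj_apply]
  refine (Submodule.map_span_le _ _ _).2 (fun m hm ↦ ?_) ⟨r, hspan, rfl⟩
  obtain ⟨α, rfl⟩ := Submonoid.mem_closure_range_iff_of_fintype.1 hm
  have hmono : ∏ j, x j ^ α j ∈ 𝒜 (Fintype.linearCombination ℕ d α) := by
    rw [Fintype.linearCombination_apply]
    exact SetLike.prod_pow_mem_graded 𝒜 d x α fun j _ ↦ hx j
  rw [GradedAlgebra.proj_apply]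
  by_cases hα : Fintype.linearCombination ℕ d α = p
  · rw [DirectSum.decompose_of_mem_same 𝒜 (hα ▸ hmono)]
    exact Submodule.subset_span ⟨α, hα, rfl⟩
  · rw [DirectSum.decompose_of_mem_ne 𝒜 hmono hα]
    exact zero_mem _

theorem prod_pow_mem_adjoin_of_mem_closure {G : Set (σ → ℕ)} {α : σ → ℕ}
    (hα : α ∈ AddSubmonoid.closure G) :
    ∏ j, x j ^ α j ∈ adjoin K ((fun β ↦ ∏ j, x j ^ β j) '' G) := by
  induction hα using AddSubmonoid.closure_induction with
  | mem β hβ => exact subset_adjoin ⟨β, hβ, rfl⟩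
  | zero => simp
  | add β γ _ _ hβ hγ =>
    simpa only [Pi.add_apply, pow_add, Finset.prod_mul_distrib] using mul_mem hβ hγ

theorem GradedAlgebra.adjoin_iUnion_eq_adjoin_prod_pow (hx : ∀ j, x j ∈ 𝒜 (d j))
    (hgen : adjoin K (Set.range x) = ⊤) (T : AddSubmonoid ι) {G : Set (σ → ℕ)}
    (hG : AddSubmonoid.closure G = T.comap (Fintype.linearCombination ℕ d)) :
    adjoin K (⋃ p ∈ T, (𝒜 p : Set R)) = adjoin K ((fun α ↦ ∏ j, x j ^ α j) '' G) := by
  refine le_antisymm (adjoin_le ?_) (adjoin_le ?_)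
  · simp only [Set.iUnion_subset_iff]
    intro p hp r hr
    refine (Subalgebra.mem_toSubmodule _).1 <| (Submodule.span_le (p := Subalgebra.toSubmodule _)).2
      ?_ (mem_span_prod_pow_of_mem 𝒜 hx hgen hr)
    rintro _ ⟨α, rfl, rfl⟩
    exact prod_pow_mem_adjoin_of_mem_closure (hG ▸ hp : α ∈ _)
  · rintro _ ⟨α, hα, rfl⟩
    have hdeg : Fintype.linearCombination ℕ d α ∈ T :=
      AddSubmonoid.mem_comap.1 (hG ▸ AddSubmonoid.subset_closure hα)
    refine subset_adjoin (Set.mem_biUnion hdeg ?_)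
    rw [Fintype.linearCombination_apply]
    exact SetLike.prod_pow_mem_graded 𝒜 d x α fun j _ ↦ hx j

theorem GradedAlgebra.adjoin_iUnion_mker_fg (hfg : (⊤ : Subalgebra K R).FG) {M : Type*}
    [AddMonoid M] (φ : ι →+ M) :
    (adjoin K (⋃ p ∈ AddMonoidHom.mker φ, (𝒜 p : Set R))).FG := by
  classical
  obtain ⟨s, hgen, hhom⟩ := exists_finset_adjoin_eq_top_and_isHomogeneousElem 𝒜 hfg
  choose d hd using fun r : s ↦ hhom r r.2
  let deg : (s → ℕ) →+ ι := Fintype.linearCombination ℕ d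
  obtain ⟨G, hG⟩ := AddMonoidHom.mker_fg (φ.comp deg)
  refine ⟨G.image fun α ↦ ∏ j : s, (j : R) ^ α j, ?_⟩
  rw [Finset.coe_image]
  refine (adjoin_iUnion_eq_adjoin_prod_pow 𝒜 hd (by rwa [Subtype.range_coe]) _ ?_).symm
  rw [hG, ← AddMonoidHom.comap_mker]
  rfl

end Graded

/-- Let `R = ⊕_{m≥0} R_m` be a finitely generated graded `ℂ`-algebra
with a compatible second `ℤ`-grading (encoded as an `ℕ × ℤ`-graded algebra `𝒜`).
For any rational number `τ`, the subalgebra `A(τ) = ⊕_{m≥0, mτ∈ℤ} (R_m)_{mτ}` —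
the subalgebra generated by the pieces `𝒜 (m,k)` with `k = mτ` — is a finitely
generated `ℂ`-algebra. -/
theorem stmt_4 (R : Type) [CommRing R] [Algebra ℂ R]
    (𝒜 : ℕ × ℤ → Submodule ℂ R) [GradedAlgebra 𝒜]
    (hfg : (⊤ : Subalgebra ℂ R).FG)
    (τ : ℚ) :
    (Algebra.adjoin ℂ
      (⋃ p ∈ {p : ℕ × ℤ | (p.2 : ℚ) = τ * p.1}, (𝒜 p : Set R))).FG := by
  let φ : ℕ × ℤ →+ ℚ :=
    { toFun := fun p ↦ p.2 - τ * p.1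
      map_zero' := by simp
      map_add' := fun p q ↦ by simp only [Prod.fst_add, Prod.snd_add]; push_cast; ring }
  have hslope : {p : ℕ × ℤ | (p.2 : ℚ) = τ * p.1} = AddMonoidHom.mker φ :=
    Set.ext fun _ ↦ sub_eq_zero.symm
  rw [hslope]
  exact GradedAlgebra.adjoin_iUnion_mker_fg 𝒜 hfg φ
end

section
/- Let P ⊂ ℝ^n be a lattice polytope and μ the projection to the first coordinate. The set of values μ(v) over vertices v of P is finite; ordering them a_0 < a_1 < … < a_r, for any two rationals τ, τ' lying in the same open interval (a_{i-1}, a_i), the slices P ∩ μ^{-1}(τ) and P ∩ μ^{-1}(τ') are normally equivalent polytopes (their normal fans coincide under the identification of the ambient hyperplanes). -/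
/-- The face of a compact convex set `K` selected by a linear functional `u`:
the set of maximizers of `u` on `K`. -/
def faceOf {n : ℕ} (K : Set (Fin n → ℝ)) (u : (Fin n → ℝ) →ₗ[ℝ] ℝ) :
    Set (Fin n → ℝ) :=
  {x ∈ K | ∀ y ∈ K, u y ≤ u x}

/-- Two (poly)topes are normally equivalent (have the same normal fan) iff two linear
functionals select the same face on one precisely when they do on the other. -/
def NormallyEquiv {n : ℕ} (K K' : Set (Fin n → ℝ)) : Prop :=
  ∀ u v : (Fin n → ℝ) →ₗ[ℝ] ℝ, (faceOf K u = faceOf K v ↔ faceOf K' u = faceOf K' v)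

/-!
Split the vertices into those below the interval (`Vm`) and those above it (`Vp`). For every
height `t` in the interval, the slice `S_t` of `P` is the convex hull of the points
`crossPoint v w t` where the segments `[v, w]`, `v ∈ Vm`, `w ∈ Vp`, cross height `t`. A face of
a convex hull is the convex hull of the generators it contains, so the faces of `S_t` are
determined by which of these generators each linear functional maximises. That pattern does
not depend on `t`: if `crossPoint v w t` maximises `u` on `S_t` but some `y ∈ S_{t'}` beats
`crossPoint v w t'`, then averaging `y` with the endpoint of `[v, w]` on the far side of `t`
gives a point of `S_t` beating `crossPoint v w t`, by convexity of `P`.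
-/

theorem IsExtreme.subset_convexHull_inter {𝕜 E : Type*} [Field 𝕜] [LinearOrder 𝕜]
    [IsStrictOrderedRing 𝕜] [AddCommGroup E] [Module 𝕜 E] {A B : Set E}
    (hB : IsExtreme 𝕜 (convexHull 𝕜 A) B) : B ⊆ convexHull 𝕜 (A ∩ B) := by
  set T := {x ∈ convexHull 𝕜 A | x ∈ B → x ∈ convexHull 𝕜 (A ∩ B)}
  have hT : Convex 𝕜 T := convex_iff_openSegment_subset.2 fun x hx y hy z hz =>
    ⟨(convex_convexHull 𝕜 A).openSegment_subset hx.1 hy.1 hz, fun hzB =>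
      (convex_convexHull 𝕜 _).openSegment_subset
        (hx.2 (hB.left_mem_of_mem_openSegment hx.1 hy.1 hzB hz))
        (hy.2 (hB.right_mem_of_mem_openSegment hx.1 hy.1 hzB hz)) hz⟩
  have hAT : convexHull 𝕜 A ⊆ T := convexHull_min
    (fun a ha => ⟨subset_convexHull 𝕜 A ha, fun haB => subset_convexHull 𝕜 _ ⟨ha, haB⟩⟩) hT
  exact fun x hx => (hAT (hB.subset hx)).2 hx

section Faces

variable {N : ℕ}

theorem faceOf_image_add (K : Set (Fin N → ℝ)) (c : Fin N → ℝ) (u : (Fin N → ℝ) →ₗ[ℝ] ℝ) :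
    faceOf ((· + c) '' K) u = (· + c) '' faceOf K u := by
  ext x
  constructor
  · rintro ⟨⟨y, hy, rfl⟩, hmax⟩
    exact ⟨y, ⟨hy, fun z hz => by simpa using hmax (z + c) ⟨z, hz, rfl⟩⟩, rfl⟩
  · rintro ⟨y, ⟨hy, hmax⟩, rfl⟩
    refine ⟨⟨y, hy, rfl⟩, ?_⟩
    rintro _ ⟨z, hz, rfl⟩
    simpa using hmax z hz

theorem convex_faceOf {K : Set (Fin N → ℝ)} (hK : Convex ℝ K) (u : (Fin N → ℝ) →ₗ[ℝ] ℝ) :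
    Convex ℝ (faceOf K u) := by
  intro x hx y hy a b ha hb hab
  refine ⟨hK hx.1 hy.1 ha hb hab, fun z hz => ?_⟩
  calc u z = a * u z + b * u z := by rw [← add_mul, hab, one_mul]
    _ ≤ a * u x + b * u y := by
      gcongr
      exacts [hx.2 z hz, hy.2 z hz]
    _ = u (a • x + b • y) := by simp

theorem isExtreme_faceOf (K : Set (Fin N → ℝ)) (u : (Fin N → ℝ) →ₗ[ℝ] ℝ) :
    IsExtreme ℝ K (faceOf K u) := by
  refine ⟨fun x hx => hx.1, fun x₁ hx₁ x₂ hx₂ x hx hseg => ⟨hx₁, fun y hy => ?_⟩⟩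
  obtain ⟨a, b, ha, hb, hab, rfl⟩ := hseg
  obtain rfl : b = 1 - a := by linarith
  have hy := hx.2 y hy
  have h₂ := hx.2 x₂ hx₂
  simp only [map_add, map_smul, smul_eq_mul] at hy h₂
  nlinarith

theorem faceOf_eq_faceOf_iff_of_eq_convexHull {K A : Set (Fin N → ℝ)}
    (hK : K = convexHull ℝ A) (u v : (Fin N → ℝ) →ₗ[ℝ] ℝ) :
    faceOf K u = faceOf K v ↔ ∀ a ∈ A, (a ∈ faceOf K u ↔ a ∈ faceOf K v) := by
  refine ⟨fun h a _ => by rw [h], fun h => ?_⟩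
  have hsub : ∀ u v, (∀ a ∈ A, a ∈ faceOf K u → a ∈ faceOf K v) → faceOf K u ⊆ faceOf K v := by
    intro u v huv
    subst hK
    exact (isExtreme_faceOf _ u).subset_convexHull_inter.trans
      (convexHull_min (fun a ha => huv a ha.1 ha.2) (convex_faceOf (convex_convexHull ℝ A) v))
  exact (hsub u v fun a ha => (h a ha).1).antisymm (hsub v u fun a ha => (h a ha).2)

theorem normallyEquiv_image_add_right_iff {K K' : Set (Fin N → ℝ)} (c : Fin N → ℝ) :
    NormallyEquiv K ((· + c) '' K') ↔ NormallyEquiv K K' :=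
  forall₂_congr fun u₁ u₂ => by
    rw [faceOf_image_add, faceOf_image_add, (add_left_injective c).image_injective.eq_iff]

end Faces

section Slices

variable {n : ℕ}

def slice (K : Set (Fin (n + 1) → ℝ)) (t : ℝ) : Set (Fin (n + 1) → ℝ) :=
  {y | y ∈ K ∧ y 0 = t}

theorem convex_slice {K : Set (Fin (n + 1) → ℝ)} (hK : Convex ℝ K) (t : ℝ) :
    Convex ℝ (slice K t) :=
  hK.inter (convex_hyperplane (LinearMap.proj (R := ℝ) (φ := fun _ => ℝ) 0).isLinear t)

theorem mem_faceOf_slice_of_mem_openSegment {K : Set (Fin (n + 1) → ℝ)} (hK : Convex ℝ K)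
    (u : (Fin (n + 1) → ℝ) →ₗ[ℝ] ℝ) {x y z : Fin (n + 1) → ℝ} (hx : x ∈ K) (hz : z ∈ K)
    (hy : y ∈ openSegment ℝ x z) (hface : y ∈ faceOf (slice K (y 0)) u) :
    z ∈ faceOf (slice K (z 0)) u := by
  obtain ⟨a, b, ha, hb, hab, rfl⟩ := hy
  refine ⟨⟨hz, rfl⟩, fun z' hz' => ?_⟩
  have hmem : a • x + b • z' ∈ slice K ((a • x + b • z) 0) :=
    ⟨hK hx hz'.1 ha.le hb.le hab, by simp [hz'.2]⟩
  have hle := hface.2 _ hmem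
  simp only [map_add, map_smul, smul_eq_mul, add_le_add_iff_left] at hle
  exact le_of_mul_le_mul_left hle hb

noncomputable def crossPoint (v w : Fin (n + 1) → ℝ) (t : ℝ) : Fin (n + 1) → ℝ :=
  AffineMap.lineMap v w ((t - v 0) / (w 0 - v 0))

variable {v w : Fin (n + 1) → ℝ} {t : ℝ}

theorem crossPoint_apply_zero (hvw : v 0 ≠ w 0) : crossPoint v w t 0 = t := by
  have : w 0 - v 0 ≠ 0 := sub_ne_zero.2 hvw.symm
  simp only [crossPoint, AffineMap.lineMap_apply_module', Pi.add_apply, Pi.smul_apply,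
    Pi.sub_apply, smul_eq_mul]
  field_simp
  ring

theorem crossPoint_left : crossPoint v w (v 0) = v := by
  simp [crossPoint]

theorem crossPoint_right (hvw : v 0 ≠ w 0) : crossPoint v w (w 0) = w := by
  simp [crossPoint, div_self (sub_ne_zero.2 hvw.symm)]

theorem smul_crossPoint (hvw : v 0 ≠ w 0) :
    (w 0 - v 0) • crossPoint v w t = (w 0 - t) • v + (t - v 0) • w := by
  have : w 0 - v 0 ≠ 0 := sub_ne_zero.2 hvw.symm
  ext j
  simp only [crossPoint, AffineMap.lineMap_apply_module', Pi.add_apply, Pi.smul_apply,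
    Pi.sub_apply, smul_eq_mul]
  field_simp
  ring

theorem crossPoint_lineMap (s s' r : ℝ) :
    crossPoint v w (AffineMap.lineMap s s' r) =
      AffineMap.lineMap (crossPoint v w s) (crossPoint v w s') r := by
  ext j
  simp only [crossPoint, AffineMap.lineMap_apply_module', Pi.add_apply, Pi.smul_apply,
    Pi.sub_apply, smul_eq_mul]
  ring

theorem crossPoint_mem_segment (ht : t ∈ Set.Icc (v 0) (w 0)) :
    crossPoint v w t ∈ segment ℝ v w :=
  lineMap_mem_segment ℝ v w
    ⟨div_nonneg (by linarith [ht.1]) (by linarith [ht.1.trans ht.2]),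
      div_le_one_of_le₀ (by linarith [ht.2]) (by linarith [ht.1.trans ht.2])⟩

theorem crossPoint_mem_openSegment {s s' : ℝ} (ht : t ∈ openSegment ℝ s s') :
    crossPoint v w t ∈ openSegment ℝ (crossPoint v w s) (crossPoint v w s') := by
  rw [openSegment_eq_image_lineMap] at ht
  obtain ⟨r, hr, rfl⟩ := ht
  rw [crossPoint_lineMap]
  exact lineMap_mem_openSegment ℝ _ _ hr

theorem mem_faceOf_slice_crossPoint_iff {K : Set (Fin (n + 1) → ℝ)} (hK : Convex ℝ K)
    (hv : v ∈ K) (hw : w ∈ K) {t t' : ℝ} (ht : t ∈ Set.Ioo (v 0) (w 0))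
    (ht' : t' ∈ Set.Ioo (v 0) (w 0)) (u : (Fin (n + 1) → ℝ) →ₗ[ℝ] ℝ) :
    crossPoint v w t ∈ faceOf (slice K t) u ↔ crossPoint v w t' ∈ faceOf (slice K t') u := by
  suffices key : ∀ {t t'}, t ∈ Set.Ioo (v 0) (w 0) → t' ∈ Set.Ioo (v 0) (w 0) →
      crossPoint v w t ∈ faceOf (slice K t) u → crossPoint v w t' ∈ faceOf (slice K t') u from
    ⟨key ht ht', key ht' ht⟩
  intro t t' ht ht' hface
  have hvw : v 0 ≠ w 0 := (ht.1.trans ht.2).ne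
  rcases eq_or_ne t t' with rfl | hne
  · exact hface
  obtain ⟨x, hx, hseg⟩ : ∃ x ∈ K, crossPoint v w t ∈ openSegment ℝ x (crossPoint v w t') := by
    rcases hne.lt_or_gt with h | h
    · have hseg := crossPoint_mem_openSegment (v := v) (w := w) (s := v 0) (s' := t')
        (by rw [openSegment_eq_Ioo (ht.1.trans h)]; exact ⟨ht.1, h⟩)
      exact ⟨v, hv, by rwa [crossPoint_left] at hseg⟩
    · have hseg := crossPoint_mem_openSegment (v := v) (w := w) (s := w 0) (s' := t')
        (by rw [openSegment_symm, openSegment_eq_Ioo (h.trans ht.2)]; exact ⟨h, ht.2⟩)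
      exact ⟨w, hw, by rwa [crossPoint_right hvw] at hseg⟩
  have hx' : crossPoint v w t' ∈ K :=
    hK.segment_subset hv hw (crossPoint_mem_segment (Set.Ioo_subset_Icc_self ht'))
  have := mem_faceOf_slice_of_mem_openSegment hK u hx hx' hseg
    (by rwa [crossPoint_apply_zero hvw])
  rwa [crossPoint_apply_zero hvw] at this

theorem sum_smul_crossPoint (Vm Vp : Finset (Fin (n + 1) → ℝ)) (t : ℝ)
    (l : (Fin (n + 1) → ℝ) → ℝ) (hvw : ∀ v ∈ Vm, ∀ w ∈ Vp, v 0 ≠ w 0) :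
    ∑ p ∈ Vm ×ˢ Vp, (l p.1 * l p.2 * (p.2 0 - p.1 0)) • crossPoint p.1 p.2 t =
      (∑ w ∈ Vp, l w * (w 0 - t)) • ∑ v ∈ Vm, l v • v +
        (∑ v ∈ Vm, l v * (t - v 0)) • ∑ w ∈ Vp, l w • w := by
  calc _ = ∑ v ∈ Vm, ∑ w ∈ Vp,
        ((l w * (w 0 - t)) • (l v • v) + (l v * (t - v 0)) • (l w • w)) := by
        rw [Finset.sum_product]
        refine Finset.sum_congr rfl fun v hv => Finset.sum_congr rfl fun w hw => ?_
        rw [mul_smul, smul_crossPoint (hvw v hv w hw)]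
        module
    _ = _ := by
        rw [Finset.sum_smul_sum, Finset.sum_smul_sum, Finset.sum_comm (s := Vp)]
        simp_rw [← Finset.sum_add_distrib]

theorem slice_convexHull_union_subset (Vm Vp : Finset (Fin (n + 1) → ℝ)) (t : ℝ)
    (hm : ∀ v ∈ Vm, v 0 < t) (hp : ∀ w ∈ Vp, t < w 0) :
    slice (convexHull ℝ ↑(Vm ∪ Vp)) t ⊆
      convexHull ℝ (Set.image2 (crossPoint · · t) (Vm : Set (Fin (n + 1) → ℝ)) Vp) := by
  rintro x ⟨hx, hxt⟩
  obtain ⟨l, hl0, hl1, rfl⟩ := Finset.mem_convexHull'.1 hx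
  have hdisj : Disjoint Vm Vp :=
    Finset.disjoint_left.2 fun v hvm hvp => (hm v hvm).not_gt (hp v hvp)
  simp only [Finset.sum_apply, Pi.smul_apply, smul_eq_mul] at hxt
  rw [Finset.sum_union hdisj] at hl1 hxt ⊢
  obtain ⟨s, hs_def⟩ : ∃ s, ∑ w ∈ Vp, l w * (w 0 - t) = s := ⟨_, rfl⟩
  have hbal : ∑ v ∈ Vm, l v * (t - v 0) = s := by
    simp only [← hs_def, mul_sub, Finset.sum_sub_distrib, ← Finset.sum_mul]
    linear_combination t * hl1 - hxt
  have hs : 0 < s := by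
    obtain ⟨y, hy, hly⟩ := Finset.exists_lt_of_sum_lt (s := Vm ∪ Vp) (f := 0) (g := l)
      (by rw [Finset.sum_union hdisj (f := l), hl1]; simp)
    rcases Finset.mem_union.1 hy with hy | hy
    · rw [← hbal]
      exact (mul_pos hly (sub_pos.2 (hm y hy))).trans_le <| Finset.single_le_sum
        (f := fun v => l v * (t - v 0)) (fun v hv => mul_nonneg (hl0 v
          (Finset.mem_union_left _ hv)) (sub_pos.2 (hm v hv)).le) hy
    · rw [← hs_def]
      exact (mul_pos hly (sub_pos.2 (hp y hy))).trans_le <| Finset.single_le_sum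
        (f := fun w => l w * (w 0 - t)) (fun w hw => mul_nonneg (hl0 w
          (Finset.mem_union_right _ hw)) (sub_pos.2 (hp w hw)).le) hy
  -- The pair `(v, w)` gets weight `l v * l w * (w 0 - v 0)`; by `hbal` these weights sum to `s`
  -- and their centre of mass is `x`.
  have hc0 : ∀ p ∈ Vm ×ˢ Vp, 0 ≤ l p.1 * l p.2 * (p.2 0 - p.1 0) := by
    intro p hp'
    obtain ⟨h1, h2⟩ := Finset.mem_product.1 hp'
    exact mul_nonneg (mul_nonneg (hl0 _ (Finset.mem_union_left _ h1))
      (hl0 _ (Finset.mem_union_right _ h2))) (by linarith [hm _ h1, hp _ h2])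
  have hc : ∑ p ∈ Vm ×ˢ Vp, l p.1 * l p.2 * (p.2 0 - p.1 0) = s := by
    calc _ = ∑ v ∈ Vm, ∑ w ∈ Vp, (l v * (t - v 0) * l w + l v * (l w * (w 0 - t))) := by
          rw [Finset.sum_product]
          exact Finset.sum_congr rfl fun v _ => Finset.sum_congr rfl fun w _ => by ring
      _ = (∑ v ∈ Vm, l v * (t - v 0)) * ∑ w ∈ Vp, l w +
          (∑ v ∈ Vm, l v) * ∑ w ∈ Vp, l w * (w 0 - t) := by
          simp_rw [Finset.sum_mul_sum, ← Finset.sum_add_distrib]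
      _ = s := by rw [hbal, hs_def]; linear_combination s * hl1
  have hcx : ∑ p ∈ Vm ×ˢ Vp, (l p.1 * l p.2 * (p.2 0 - p.1 0)) • crossPoint p.1 p.2 t =
      s • (∑ v ∈ Vm, l v • v + ∑ w ∈ Vp, l w • w) := by
    rw [sum_smul_crossPoint Vm Vp t l fun v hv w hw => ((hm v hv).trans (hp w hw)).ne, hbal,
      hs_def, smul_add]
  convert Finset.centerMass_mem_convexHull (Vm ×ˢ Vp) hc0 (hc ▸ hs)
    (fun p hp' => Set.mem_image2_of_mem (Finset.mem_product.1 hp').1 (Finset.mem_product.1 hp').2)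
  rw [Finset.centerMass, hc, hcx, inv_smul_smul₀ hs.ne']

theorem slice_convexHull_union_eq (Vm Vp : Finset (Fin (n + 1) → ℝ)) (t : ℝ)
    (hm : ∀ v ∈ Vm, v 0 < t) (hp : ∀ w ∈ Vp, t < w 0) :
    slice (convexHull ℝ ↑(Vm ∪ Vp)) t =
      convexHull ℝ (Set.image2 (crossPoint · · t) (Vm : Set (Fin (n + 1) → ℝ)) Vp) := by
  refine (slice_convexHull_union_subset Vm Vp t hm hp).antisymm
    (convexHull_min ?_ (convex_slice (convex_convexHull ℝ _) t))
  rintro _ ⟨v, hv, w, hw, rfl⟩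
  exact ⟨segment_subset_convexHull (Finset.mem_coe.2 (Finset.mem_union_left _ hv))
      (Finset.mem_coe.2 (Finset.mem_union_right _ hw))
      (crossPoint_mem_segment ⟨(hm v hv).le, (hp w hw).le⟩),
    crossPoint_apply_zero ((hm v hv).trans (hp w hw)).ne⟩

theorem normallyEquiv_slice_convexHull_union (Vm Vp : Finset (Fin (n + 1) → ℝ)) {t t' : ℝ}
    (hm : ∀ v ∈ Vm, v 0 < min t t') (hp : ∀ w ∈ Vp, max t t' < w 0) :
    NormallyEquiv (slice (convexHull ℝ (↑(Vm ∪ Vp) : Set (Fin (n + 1) → ℝ))) t)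
      (slice (convexHull ℝ ↑(Vm ∪ Vp)) t') := by
  intro u₁ u₂
  have hm' : ∀ s ∈ Set.Icc (min t t') (max t t'), ∀ v ∈ Vm, v 0 < s :=
    fun s hs v hv => (hm v hv).trans_le hs.1
  have hp' : ∀ s ∈ Set.Icc (min t t') (max t t'), ∀ w ∈ Vp, s < w 0 :=
    fun s hs w hw => hs.2.trans_lt (hp w hw)
  have ht : t ∈ Set.Icc (min t t') (max t t') := ⟨min_le_left _ _, le_max_left _ _⟩
  have ht' : t' ∈ Set.Icc (min t t') (max t t') := ⟨min_le_right _ _, le_max_right _ _⟩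
  rw [faceOf_eq_faceOf_iff_of_eq_convexHull
      (slice_convexHull_union_eq Vm Vp t (hm' t ht) (hp' t ht)),
    faceOf_eq_faceOf_iff_of_eq_convexHull
      (slice_convexHull_union_eq Vm Vp t' (hm' t' ht') (hp' t' ht')),
    Set.forall_mem_image2, Set.forall_mem_image2]
  refine forall₂_congr fun v hv => forall₂_congr fun w hw => ?_
  have hcross := mem_faceOf_slice_crossPoint_iff (convex_convexHull ℝ _)
    (subset_convexHull ℝ _ (Finset.mem_union_left Vp hv))
    (subset_convexHull ℝ _ (Finset.mem_union_right Vm hw))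
    ⟨hm' t ht v hv, hp' t ht w hw⟩ ⟨hm' t' ht' v hv, hp' t' ht' w hw⟩
  rw [hcross u₁, hcross u₂]

end Slices

theorem stmt_6_general (n : ℕ) (V : Finset (Fin (n + 1) → ℝ))
    (P : Set (Fin (n + 1) → ℝ)) (hP : P = convexHull ℝ (V : Set (Fin (n + 1) → ℝ)))
    (τ τ' : ℚ)
    (hsep : ∀ v ∈ V, v 0 < min (τ : ℝ) (τ' : ℝ) ∨ max (τ : ℝ) (τ' : ℝ) < v 0) :
    {a : ℝ | ∃ v ∈ V, v 0 = a}.Finite ∧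
    NormallyEquiv {y | y ∈ P ∧ y 0 = (τ : ℝ)}
      ((fun y => y + fun i => if i = 0 then (τ : ℝ) - (τ' : ℝ) else 0) ''
        {y | y ∈ P ∧ y 0 = (τ' : ℝ)}) := by
  refine ⟨(V.finite_toSet.image fun v => v 0).subset ?_, ?_⟩
  · rintro _ ⟨v, hv, rfl⟩
    exact ⟨v, hv, rfl⟩
  rw [normallyEquiv_image_add_right_iff]
  set Vm := V.filter (· 0 < min (τ : ℝ) τ')
  set Vp := V.filter (max (τ : ℝ) τ' < · 0)
  have hV : V = Vm ∪ Vp := by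
    ext x
    simp only [Vm, Vp, Finset.mem_union, Finset.mem_filter, ← and_or_left, iff_self_and]
    exact hsep x
  subst hP
  rw [hV]
  exact normallyEquiv_slice_convexHull_union Vm Vp (fun v hv => (Finset.mem_filter.1 hv).2)
    (fun w hw => (Finset.mem_filter.1 hw).2)

/-- Let `P ⊂ ℝ^{n+1}` be a lattice polytope (convex hull of a finite set of
integral points) and `μ` the projection to the `0`-th coordinate. The set of values of `μ`
on the vertices is finite; and if two rationals `τ, τ'` lie in the same open interval
between consecutive such critical values (no vertex value lies in `[min τ τ', max τ τ']`),
then the slices `P ∩ μ⁻¹(τ)` and `P ∩ μ⁻¹(τ')` are normally equivalent, after identifying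
the ambient hyperplanes by the translation along the `0`-th axis. -/
theorem stmt_6 (n : ℕ) (V : Finset (Fin (n + 1) → ℝ)) (hV : V.Nonempty)
    (hlat : ∀ v ∈ V, ∀ i, ∃ z : ℤ, v i = (z : ℝ))
    (P : Set (Fin (n + 1) → ℝ)) (hP : P = convexHull ℝ (V : Set (Fin (n + 1) → ℝ)))
    (τ τ' : ℚ)
    (hsep : ∀ v ∈ V, v 0 < min (τ : ℝ) (τ' : ℝ) ∨ max (τ : ℝ) (τ' : ℝ) < v 0) :
    {a : ℝ | ∃ v ∈ V, v 0 = a}.Finite ∧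
    NormallyEquiv {y | y ∈ P ∧ y 0 = (τ : ℝ)}
      ((fun y => y + fun i => if i = 0 then (τ : ℝ) - (τ' : ℝ) else 0) ''
        {y | y ∈ P ∧ y 0 = (τ' : ℝ)}) :=
  stmt_6_general n V P hP τ τ' hsep
end
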